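/- arXiv:2503.21684 — 3 statements merged into one kernel-verified Lean document; each statement's English description precedes it below -/
import Mathlib

section
/- Let $c_1, c_2 > 0$ and $M > 0$. Suppose $(m_1,\dots,m_N)$ with all $m_k > 0$ and $\sum_{k=1}^N m_k = M$ minimizes $\sum_{k=1}^N (c_1\sqrt{m_k} + c_2 m_k^2)$ over all finite positive splittings of $M$. Then at most one of the $m_k$ lies in the interval $(0, (c_1/(8c_2))^{2/3})$. -/
open Real Set Finset

lemma sqrtT_mul_T (c1 c2 : ℝ) (hc1 : 0 < c1) (hc2 : 0 < c2) :
    Real.sqrt ((c1 / (8 * c2)) ^ ((2 : ℝ) / 3)) * (c1 / (8 * c2)) ^ ((2 : ℝ) / 3)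
      = c1 / (8 * c2) := by
  set x := c1 / (8 * c2) with hx
  have hx0 : 0 < x := by positivity
  rw [Real.sqrt_eq_rpow, ← Real.rpow_mul hx0.le, ← Real.rpow_add hx0]
  norm_num

lemma core_aux (c1 c2 a b : ℝ) (hc1 : 0 < c1) (hc2 : 0 < c2)
    (ha : 0 < a) (hab : a ≤ b)
    (hat : a < (c1 / (8 * c2)) ^ ((2 : ℝ) / 3))
    (hbt : b < (c1 / (8 * c2)) ^ ((2 : ℝ) / 3)) :
    c1 * Real.sqrt (a / 32) + c2 * (a / 32) ^ 2
      + (c1 * Real.sqrt (a + b - a / 32) + c2 * (a + b - a / 32) ^ 2)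
    < c1 * Real.sqrt a + c2 * a ^ 2 + (c1 * Real.sqrt b + c2 * b ^ 2) := by
  have hb : 0 < b := lt_of_lt_of_le ha hab
  set sa := Real.sqrt a with hsa
  set sb := Real.sqrt b with hsb
  have hsa0 : 0 < sa := Real.sqrt_pos.mpr ha
  have hsb0 : 0 < sb := Real.sqrt_pos.mpr hb
  have hsa2 : sa ^ 2 = a := Real.sq_sqrt ha.le
  have hsb2 : sb ^ 2 = b := Real.sq_sqrt hb.le
  have hsab : sa ≤ sb := Real.sqrt_le_sqrt hab
  -- sqrt (a+b) ≤ sb + a/(2 sb)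
  have h1 : Real.sqrt (a + b) ≤ sb + a / (2 * sb) := by
    have key : a + b ≤ (sb + a / (2 * sb)) ^ 2 := by
      have h2sb : 2 * sb * (a / (2 * sb)) = a := by field_simp
      nlinarith [sq_nonneg (a / (2 * sb))]
    calc Real.sqrt (a + b) ≤ Real.sqrt ((sb + a / (2 * sb)) ^ 2) :=
          Real.sqrt_le_sqrt key
      _ = sb + a / (2 * sb) := Real.sqrt_sq (by positivity)
  have h2 : a / (2 * sb) ≤ sa / 2 := by
    rw [div_le_div_iff₀ (by positivity) (by norm_num)]
    nlinarith
  -- sa * b < c1 / (8 c2)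
  have h3 : sa * b < c1 / (8 * c2) := by
    have h4 : sa < Real.sqrt ((c1 / (8 * c2)) ^ ((2 : ℝ) / 3)) :=
      Real.sqrt_lt_sqrt ha.le hat
    calc sa * b < Real.sqrt ((c1 / (8 * c2)) ^ ((2 : ℝ) / 3)) *
            (c1 / (8 * c2)) ^ ((2 : ℝ) / 3) := by
          apply mul_lt_mul' h4.le hbt hb.le (Real.sqrt_pos.mpr (by positivity))
      _ = c1 / (8 * c2) := sqrtT_mul_T c1 c2 hc1 hc2
  -- gap bound
  have h5 : 2 * c2 * (a * b) < c1 * sa / 4 := by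
    have : a * b = sa * (sa * b) := by nlinarith
    rw [this]
    have := mul_lt_mul_of_pos_left h3 (by positivity : (0:ℝ) < 2 * c2 * sa)
    calc 2 * c2 * (sa * (sa * b)) = 2 * c2 * sa * (sa * b) := by ring
      _ < 2 * c2 * sa * (c1 / (8 * c2)) := this
      _ = c1 * sa / 4 := by field_simp; ring
  have hgap : c1 * Real.sqrt (a + b) + c2 * (a + b) ^ 2 + c1 * sa / 4
      < c1 * sa + c2 * a ^ 2 + (c1 * sb + c2 * b ^ 2) := by
    have hs1 : c1 * Real.sqrt (a + b) ≤ c1 * (sb + sa / 2) := by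
      apply mul_le_mul_of_nonneg_left _ hc1.le
      linarith
    nlinarith
  -- eps bounds
  have heps : Real.sqrt (a / 32) < sa / 4 := by
    rw [Real.sqrt_lt' (by positivity)]
    nlinarith
  have hsq : (a / 32) ^ 2 + (a + b - a / 32) ^ 2 ≤ (a + b) ^ 2 := by nlinarith
  have hsqrt2 : Real.sqrt (a + b - a / 32) ≤ Real.sqrt (a + b) :=
    Real.sqrt_le_sqrt (by linarith)
  have hc1e : c1 * Real.sqrt (a / 32) < c1 * (sa / 4) :=
    mul_lt_mul_of_pos_left heps hc1
  have hc1s : c1 * Real.sqrt (a + b - a / 32) ≤ c1 * Real.sqrt (a + b) :=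
    mul_le_mul_of_nonneg_left hsqrt2 hc1.le
  nlinarith

lemma core' (c1 c2 a b : ℝ) (hc1 : 0 < c1) (hc2 : 0 < c2)
    (ha : 0 < a) (hb : 0 < b)
    (hat : a < (c1 / (8 * c2)) ^ ((2 : ℝ) / 3))
    (hbt : b < (c1 / (8 * c2)) ^ ((2 : ℝ) / 3)) :
    ∃ ε, 0 < ε ∧ ε < a + b ∧
      c1 * Real.sqrt ε + c2 * ε ^ 2
        + (c1 * Real.sqrt (a + b - ε) + c2 * (a + b - ε) ^ 2)
      < c1 * Real.sqrt a + c2 * a ^ 2 + (c1 * Real.sqrt b + c2 * b ^ 2) := by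
  rcases le_total a b with hab | hab
  · exact ⟨a / 32, by positivity, by linarith,
      core_aux c1 c2 a b hc1 hc2 ha hab hat hbt⟩
  · refine ⟨b / 32, by positivity, by linarith, ?_⟩
    have := core_aux c1 c2 b a hc1 hc2 hb hab hbt hat
    have hcomm : b + a = a + b := add_comm b a
    rw [hcomm] at this
    linarith

/-- In a minimizing finite positive splitting of the mass `M` for the energy
`∑ (c₁√mₖ + c₂mₖ²)`, at most one of the masses lies in `(0, (c₁/(8c₂))^(2/3))`. -/
theorem stmt_1 (c1 c2 M : ℝ) (hc1 : 0 < c1) (hc2 : 0 < c2) (hM : 0 < M)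
    (N : ℕ) (m : Fin N → ℝ) (hpos : ∀ k, 0 < m k) (hsum : ∑ k, m k = M)
    (hmin : ∀ (N' : ℕ) (m' : Fin N' → ℝ), (∀ k, 0 < m' k) → ∑ k, m' k = M →
      ∑ k, (c1 * Real.sqrt (m k) + c2 * (m k) ^ 2) ≤
        ∑ k, (c1 * Real.sqrt (m' k) + c2 * (m' k) ^ 2)) :
    ∀ j k : Fin N, m j < (c1 / (8 * c2)) ^ ((2 : ℝ) / 3) →
      m k < (c1 / (8 * c2)) ^ ((2 : ℝ) / 3) → j = k := by
  intro j k hj hk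
  by_contra hjk
  obtain ⟨ε, hε0, hεs, hlt⟩ :=
    core' c1 c2 (m j) (m k) hc1 hc2 (hpos j) (hpos k) hj hk
  set m' : Fin N → ℝ :=
    fun i => if i = j then ε else if i = k then m j + m k - ε else m i with hm'
  have hkj : k ≠ j := fun h => hjk h.symm
  have hk' : k ∈ (Finset.univ : Finset (Fin N)).erase j :=
    Finset.mem_erase.mpr ⟨hkj, Finset.mem_univ k⟩
  have hdec : ∀ f : Fin N → ℝ,
      ∑ i, f i = f j + (f k + ∑ i ∈ ((Finset.univ : Finset (Fin N)).erase j).erase k, f i) := by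
    intro f
    rw [← Finset.add_sum_erase _ f (Finset.mem_univ j), ← Finset.add_sum_erase _ f hk']
  have hm'j : m' j = ε := by simp [hm']
  have hm'k : m' k = m j + m k - ε := by simp [hm', hkj]
  have htail : ∀ f : ℝ → ℝ,
      ∑ i ∈ ((Finset.univ : Finset (Fin N)).erase j).erase k, f (m' i)
        = ∑ i ∈ ((Finset.univ : Finset (Fin N)).erase j).erase k, f (m i) := by
    intro f
    refine Finset.sum_congr rfl fun i hi => ?_
    obtain ⟨hik, hij⟩ := by
      simpa [Finset.mem_erase] using hi
    simp [hm', hij, hik]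
  have hpos' : ∀ i, 0 < m' i := by
    intro i
    by_cases h1 : i = j
    · simpa [hm', h1] using hε0
    · by_cases h2 : i = k
      · simp only [hm', h1, h2, if_false, if_true, if_neg hkj]
        simp [hkj]
        linarith
      · simpa [hm', h1, h2] using hpos i
  have hsum' : ∑ i, m' i = M := by
    rw [hdec m', hm'j, hm'k, htail (fun x => x)]
    rw [hdec m] at hsum
    linarith
  have := hmin N m' hpos' hsum'
  rw [hdec (fun i => c1 * Real.sqrt (m i) + c2 * (m i) ^ 2),
      hdec (fun i => c1 * Real.sqrt (m' i) + c2 * (m' i) ^ 2)] at this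
  simp only [hm'j, hm'k] at this
  rw [htail (fun x => c1 * Real.sqrt x + c2 * x ^ 2)] at this
  linarith
end

section
/- Let $c_1, c_2 > 0$ and $M > 0$. Any minimizer $(m_1,\dots,m_N)$, with all $m_k > 0$ and $\sum m_k = M$, of $\sum_{k=1}^N (c_1\sqrt{m_k}+c_2 m_k^2)$ over finite positive splittings of $M$ satisfies $N \le 1 + M (c_1/(8c_2))^{-2/3}$. -/
open Real Set Finset

private lemma sum_update_pair {n : ℕ} (g : Fin n → ℝ) {j k : Fin n} (hjk : j ≠ k) (x y : ℝ) :
    ∑ i, Function.update (Function.update g j x) k y i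
      = ∑ i, g i - g j - g k + x + y := by
  classical
  rw [Finset.sum_update_of_mem (Finset.mem_univ k),
    Finset.sum_update_of_mem (by simp [hjk] : j ∈ Finset.univ \ {k})]
  simp only [Finset.sdiff_singleton_eq_erase]
  have e2 : ∑ i, g i = g k + ∑ i ∈ Finset.univ.erase k, g i :=
    (Finset.add_sum_erase _ g (Finset.mem_univ k)).symm
  have e1 : ∑ i ∈ Finset.univ.erase k, g i
      = g j + ∑ i ∈ (Finset.univ.erase k).erase j, g i :=
    (Finset.add_sum_erase _ g (by simp [hjk])).symm
  rw [e2, e1]; ring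

private lemma key_st (c1 c2 : ℝ) (hc1 : 0 < c1) (hc2 : 0 < c2) {s t : ℝ}
    (hs : 0 < s) (ht : 0 < t)
    (hsu : s < (c1 / (8 * c2)) ^ ((1 : ℝ) / 3))
    (htu : t < (c1 / (8 * c2)) ^ ((1 : ℝ) / 3)) :
    c1 * Real.sqrt (s ^ 2 + t ^ 2) + c2 * (s ^ 2 + t ^ 2) ^ 2
      < c1 * s + c2 * (s ^ 2) ^ 2 + (c1 * t + c2 * (t ^ 2) ^ 2) := by
  set x := c1 / (8 * c2) with hxdef
  have hx : 0 < x := by positivity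
  set u := x ^ ((1 : ℝ) / 3) with hudef
  have hu : 0 < u := Real.rpow_pos_of_pos hx _
  have hu3 : u ^ 3 = x := by
    rw [hudef, ← Real.rpow_natCast (x ^ ((1:ℝ)/3)) 3, ← Real.rpow_mul hx.le]
    norm_num
  set r := Real.sqrt (s ^ 2 + t ^ 2) with hrdef
  have hr2 : r ^ 2 = s ^ 2 + t ^ 2 := Real.sq_sqrt (by positivity)
  have hr0 : 0 ≤ r := Real.sqrt_nonneg _
  have hrs : s ≤ r := by
    calc s = Real.sqrt (s ^ 2) := (Real.sqrt_sq hs.le).symm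
    _ ≤ r := Real.sqrt_le_sqrt (by nlinarith)
  have hrt : t ≤ r := by
    calc t = Real.sqrt (t ^ 2) := (Real.sqrt_sq ht.le).symm
    _ ≤ r := Real.sqrt_le_sqrt (by nlinarith)
  clear_value u r
  have hub : r * (s + t) ≤ s ^ 2 + t ^ 2 + s * t := by
    nlinarith [mul_nonneg (sub_nonneg.2 hrs) (sub_nonneg.2 hrt)]
  have h1 : s * t < u * u := by nlinarith
  have h2 : s + t < 2 * u := by linarith
  have h3 : s * t * (s + t) < u * u * (2 * u) := by
    nlinarith [mul_lt_mul_of_pos_right h1 (show (0:ℝ) < s + t by linarith),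
      mul_lt_mul_of_pos_left h2 (show (0:ℝ) < u * u by positivity)]
  have hx4 : (4 * c2) * u ^ 3 = c1 / 2 := by rw [hu3, hxdef]; field_simp; ring
  have hstu : 2 * c2 * (s * t) * (s + t) < c1 := by
    nlinarith [mul_pos hc2 (sub_pos.mpr h3), hx4, hc1]
  have hst : (0:ℝ) < s + t := by linarith
  have h5 : c1 * (r * (s + t)) ≤ c1 * (s ^ 2 + t ^ 2 + s * t) :=
    mul_le_mul_of_nonneg_left hub hc1.le
  have h6 : (s * t) * (2 * c2 * (s * t) * (s + t)) < (s * t) * c1 :=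
    mul_lt_mul_of_pos_left hstu (mul_pos hs ht)
  have H : (c1 * r + c2 * (s ^ 2 + t ^ 2) ^ 2) * (s + t)
      < (c1 * s + c2 * (s ^ 2) ^ 2 + (c1 * t + c2 * (t ^ 2) ^ 2)) * (s + t) := by
    nlinarith [h5, h6]
  exact lt_of_mul_lt_mul_right H hst.le

private lemma key_ab (c1 c2 : ℝ) (hc1 : 0 < c1) (hc2 : 0 < c2) {a b : ℝ}
    (ha : 0 < a) (hb : 0 < b)
    (haθ : a < (c1 / (8 * c2)) ^ ((2 : ℝ) / 3))
    (hbθ : b < (c1 / (8 * c2)) ^ ((2 : ℝ) / 3)) :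
    c1 * Real.sqrt (a + b) + c2 * (a + b) ^ 2
      < c1 * Real.sqrt a + c2 * a ^ 2 + (c1 * Real.sqrt b + c2 * b ^ 2) := by
  have hx : 0 < c1 / (8 * c2) := by positivity
  have hθu : Real.sqrt ((c1 / (8 * c2)) ^ ((2 : ℝ) / 3)) = (c1 / (8 * c2)) ^ ((1 : ℝ) / 3) := by
    rw [Real.sqrt_eq_rpow, ← Real.rpow_mul hx.le]
    norm_num
  set s := Real.sqrt a with hsdef
  set t := Real.sqrt b with htdef
  have hs0 : 0 < s := Real.sqrt_pos.2 ha
  have ht0 : 0 < t := Real.sqrt_pos.2 hb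
  have hs2 : s ^ 2 = a := Real.sq_sqrt ha.le
  have ht2 : t ^ 2 = b := Real.sq_sqrt hb.le
  have hsu : s < (c1 / (8 * c2)) ^ ((1 : ℝ) / 3) := by
    rw [← hθu]; exact Real.sqrt_lt_sqrt ha.le haθ
  have htu : t < (c1 / (8 * c2)) ^ ((1 : ℝ) / 3) := by
    rw [← hθu]; exact Real.sqrt_lt_sqrt hb.le hbθ
  have h := key_st c1 c2 hc1 hc2 hs0 ht0 hsu htu
  rw [hs2, ht2] at h
  exact h

private lemma energy_mono (c1 c2 : ℝ) (hc1 : 0 < c1) (hc2 : 0 < c2) {p q : ℝ}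
    (hp : 0 ≤ p) (hpq : p ≤ q) :
    c1 * Real.sqrt p + c2 * p ^ 2 ≤ c1 * Real.sqrt q + c2 * q ^ 2 := by
  have h1 : Real.sqrt p ≤ Real.sqrt q := Real.sqrt_le_sqrt hpq
  have h2 : c1 * Real.sqrt p ≤ c1 * Real.sqrt q := mul_le_mul_of_nonneg_left h1 hc1.le
  have h3 : c2 * p ^ 2 ≤ c2 * q ^ 2 :=
    mul_le_mul_of_nonneg_left (pow_le_pow_left₀ hp hpq 2) hc2.le
  linarith

private noncomputable def energyF (c1 c2 z : ℝ) : ℝ := c1 * Real.sqrt z + c2 * z ^ 2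

private lemma key_E (c1 c2 : ℝ) (hc1 : 0 < c1) (hc2 : 0 < c2) {a b : ℝ}
    (ha : 0 < a) (hb : 0 < b)
    (haθ : a < (c1 / (8 * c2)) ^ ((2 : ℝ) / 3))
    (hbθ : b < (c1 / (8 * c2)) ^ ((2 : ℝ) / 3)) :
    energyF c1 c2 (a + b) < energyF c1 c2 a + energyF c1 c2 b := by
  simpa [energyF] using key_ab c1 c2 hc1 hc2 ha hb haθ hbθ

/-- Any minimizing finite positive splitting of the mass `M` for the energy
`∑ (c₁√mₖ + c₂mₖ²)` consists of at most `1 + M·(c₁/(8c₂))^(-2/3)` masses. -/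
theorem stmt_2 (c1 c2 M : ℝ) (hc1 : 0 < c1) (hc2 : 0 < c2) (hM : 0 < M)
    (N : ℕ) (m : Fin N → ℝ) (hpos : ∀ k, 0 < m k) (hsum : ∑ k, m k = M)
    (hmin : ∀ (N' : ℕ) (m' : Fin N' → ℝ), (∀ k, 0 < m' k) → ∑ k, m' k = M →
      ∑ k, (c1 * Real.sqrt (m k) + c2 * (m k) ^ 2) ≤
        ∑ k, (c1 * Real.sqrt (m' k) + c2 * (m' k) ^ 2)) :
    (N : ℝ) ≤ 1 + M * (c1 / (8 * c2)) ^ (-(2 : ℝ) / 3) := by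
  classical
  have hx : 0 < c1 / (8 * c2) := by positivity
  set θ := (c1 / (8 * c2)) ^ ((2 : ℝ) / 3) with hθdef
  have hθ : 0 < θ := Real.rpow_pos_of_pos hx _
  set S : Finset (Fin N) := Finset.univ.filter (fun i => m i < θ) with hSdef
  have hS1 : S.card ≤ 1 := by
    by_contra hcon
    push_neg at hcon
    obtain ⟨j, hj, k, hk, hjk⟩ := Finset.one_lt_card.mp hcon
    rw [hSdef, Finset.mem_filter] at hj hk
    have haθ : m j < θ := hj.2
    have hbθ : m k < θ := hk.2
    set a := m j with hadef
    set b := m k with hbdef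
    clear_value a b
    have ha : 0 < a := by rw [hadef]; exact hpos j
    have hb : 0 < b := by rw [hbdef]; exact hpos k
    have hgap : energyF c1 c2 (a + b) < energyF c1 c2 a + energyF c1 c2 b :=
      key_E c1 c2 hc1 hc2 ha hb haθ hbθ
    set g : ℝ := energyF c1 c2 a + energyF c1 c2 b - energyF c1 c2 (a + b) with hgdef
    have hg : 0 < g := by rw [hgdef]; linarith
    set q : ℝ := g / (2 * (c1 + c2)) with hqdef
    have hq : 0 < q := by rw [hqdef]; positivity
    have hq2 : (c1 + c2) * q = g / 2 := by rw [hqdef]; field_simp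
    clear_value g q
    set ε : ℝ := min b (min 1 (q ^ 2)) with hεdef
    have hε0 : 0 < ε := lt_min hb (lt_min one_pos (by positivity))
    have hεb : ε ≤ b := min_le_left _ _
    have hε1 : ε ≤ 1 := le_trans (min_le_right _ _) (min_le_left _ _)
    have hεq : ε ≤ q ^ 2 := le_trans (min_le_right _ _) (min_le_right _ _)
    clear_value ε
    have hsqε : Real.sqrt ε ≤ q := by
      calc Real.sqrt ε ≤ Real.sqrt (q ^ 2) := Real.sqrt_le_sqrt hεq
      _ = q := Real.sqrt_sq hq.le
    have hεsq : ε ≤ Real.sqrt ε := by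
      calc ε = Real.sqrt (ε ^ 2) := (Real.sqrt_sq hε0.le).symm
      _ ≤ Real.sqrt ε := Real.sqrt_le_sqrt (by nlinarith)
    have hFε : energyF c1 c2 ε ≤ g / 2 := by
      have h2 : ε ^ 2 ≤ Real.sqrt ε := by nlinarith
      have h5 : energyF c1 c2 ε ≤ (c1 + c2) * Real.sqrt ε := by
        simp only [energyF]; nlinarith
      have h3 : (c1 + c2) * Real.sqrt ε ≤ (c1 + c2) * q :=
        mul_le_mul_of_nonneg_left hsqε (by linarith)
      linarith
    have hFab : energyF c1 c2 (a + b - ε) ≤ energyF c1 c2 (a + b) := by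
      simp only [energyF]
      exact energy_mono c1 c2 hc1 hc2 (by linarith) (by linarith)
    set m' : Fin N → ℝ := Function.update (Function.update m j (a + b - ε)) k ε with hm'def
    have hpos' : ∀ i, 0 < m' i := by
      intro i
      simp only [hm'def, Function.update_apply]
      split_ifs with h1 h2
      · exact hε0
      · linarith
      · exact hpos i
    have hsum' : ∑ i, m' i = M := by
      rw [hm'def, sum_update_pair m hjk, hsum, ← hadef, ← hbdef]; ring
    have hcomp : (fun i => energyF c1 c2 (m' i))
        = Function.update (Function.update (fun i => energyF c1 c2 (m i)) j
            (energyF c1 c2 (a + b - ε))) k (energyF c1 c2 ε) := by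
      funext i
      simp only [hm'def, Function.update_apply]
      split_ifs with h1 h2 <;> rfl
    have hEsum : ∑ i, energyF c1 c2 (m' i)
        = ∑ i, energyF c1 c2 (m i) - energyF c1 c2 a - energyF c1 c2 b
            + energyF c1 c2 (a + b - ε) + energyF c1 c2 ε := by
      calc ∑ i, energyF c1 c2 (m' i)
          = ∑ i, Function.update (Function.update (fun i => energyF c1 c2 (m i)) j
            (energyF c1 c2 (a + b - ε))) k (energyF c1 c2 ε) i := by rw [← hcomp]
      _ = ∑ i, energyF c1 c2 (m i) - energyF c1 c2 (m j) - energyF c1 c2 (m k)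
            + energyF c1 c2 (a + b - ε) + energyF c1 c2 ε := by
          rw [sum_update_pair _ hjk]
      _ = _ := by rw [← hadef, ← hbdef]
    have hlt : ∑ i, energyF c1 c2 (m' i) < ∑ i, energyF c1 c2 (m i) := by
      rw [hEsum]
      linarith
    have hge := hmin N m' hpos' hsum'
    simp only [energyF] at hlt
    linarith
  -- counting
  have hcompl : ∀ i ∈ Finset.univ \ S, θ ≤ m i := by
    intro i hi
    rw [Finset.mem_sdiff, hSdef, Finset.mem_filter] at hi
    push_neg at hi
    exact hi.2 (Finset.mem_univ i)
  have hsum2 : ((Finset.univ \ S).card : ℝ) * θ ≤ ∑ i ∈ Finset.univ \ S, m i := by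
    have := Finset.card_nsmul_le_sum (Finset.univ \ S) m θ hcompl
    simpa [nsmul_eq_mul] using this
  have h3 : ∑ i ∈ Finset.univ \ S, m i ≤ M := by
    rw [← hsum]
    exact Finset.sum_le_sum_of_subset_of_nonneg (Finset.sdiff_subset)
      (fun i _ _ => (hpos i).le)
  have hcard : N ≤ (Finset.univ \ S).card + 1 := by
    have h := Finset.card_sdiff_add_card_eq_card (Finset.subset_univ S)
    rw [Finset.card_univ, Fintype.card_fin] at h
    omega
  have hcardR : (N : ℝ) - 1 ≤ ((Finset.univ \ S).card : ℝ) := by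
    have : (N : ℝ) ≤ ((Finset.univ \ S).card : ℝ) + 1 := by exact_mod_cast hcard
    linarith
  have hNM : ((N : ℝ) - 1) * θ ≤ M :=
    le_trans (mul_le_mul_of_nonneg_right hcardR hθ.le) (le_trans hsum2 h3)
  have hinv : (c1 / (8 * c2)) ^ (-(2 : ℝ) / 3) = θ⁻¹ := by
    rw [show (-(2 : ℝ) / 3) = -((2 : ℝ) / 3) by ring, Real.rpow_neg hx.le, hθdef]
  rw [hinv]
  clear_value θ
  have hfin : (N : ℝ) - 1 ≤ M / θ := (le_div_iff₀ hθ).mpr hNM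
  rw [div_eq_mul_inv] at hfin
  linarith
end

section
/- Let $c_1, c_2 > 0$, $M > 0$, and suppose $(m_1,\dots,m_N)$ with $N \ge 2$, all $m_k > 0$, $\sum m_k = M$, minimizes $\sum_{k=1}^N (c_1\sqrt{m_k}+c_2 m_k^2)$ over all finite positive splittings of $M$. Then $m_1 = m_2 = \cdots = m_N = M/N$. -/
open Real Set Finset

lemma sum_update_one' {N : ℕ} (t : Fin N) (w : Fin N → ℝ) (c : ℝ) (g : ℝ → ℝ) :
    ∑ k, g (Function.update w t c k) = g c + ∑ k ∈ Finset.univ.erase t, g (w k) := by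
  rw [← Finset.add_sum_erase _ (fun k => g (Function.update w t c k)) (Finset.mem_univ t),
      Function.update_self]
  congr 1
  refine Finset.sum_congr rfl fun k hk => ?_
  rw [Function.update_of_ne (Finset.ne_of_mem_erase hk)]

lemma sum_update_two' {N : ℕ} (i j : Fin N) (hij : i ≠ j) (v : Fin N → ℝ)
    (x y : ℝ) (g : ℝ → ℝ) :
    ∑ k, g (Function.update (Function.update v i x) j y k)
      = ∑ k, g (v k) - g (v i) - g (v j) + g x + g y := by
  have hi : i ∈ Finset.univ.erase j := Finset.mem_erase.mpr ⟨hij, Finset.mem_univ i⟩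
  rw [sum_update_one']
  rw [← Finset.add_sum_erase _ (fun k => g (Function.update v i x k)) hi,
      Function.update_self]
  have h1 : ∑ k ∈ (Finset.univ.erase j).erase i, g (Function.update v i x k)
      = ∑ k ∈ (Finset.univ.erase j).erase i, g (v k) := by
    refine Finset.sum_congr rfl fun k hk => ?_
    rw [Function.update_of_ne (Finset.ne_of_mem_erase hk)]
  rw [h1]
  have h2 : ∑ k, g (v k)
      = g (v j) + (g (v i) + ∑ k ∈ (Finset.univ.erase j).erase i, g (v k)) := by
    rw [Finset.add_sum_erase _ (fun k => g (v k)) hi,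
        Finset.add_sum_erase _ (fun k => g (v k)) (Finset.mem_univ j)]
  rw [h2]; ring

set_option maxHeartbeats 1000000 in
/-- In a minimizing finite positive splitting of the mass `M` for the energy
`∑ (c₁√mₖ + c₂mₖ²)` with at least two masses, all masses are equal to `M/N`. -/
theorem stmt_3 (c1 c2 M : ℝ) (hc1 : 0 < c1) (hc2 : 0 < c2) (hM : 0 < M)
    (N : ℕ) (hN : 2 ≤ N) (m : Fin N → ℝ) (hpos : ∀ k, 0 < m k) (hsum : ∑ k, m k = M)
    (hmin : ∀ (N' : ℕ) (m' : Fin N' → ℝ), (∀ k, 0 < m' k) → ∑ k, m' k = M →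
      ∑ k, (c1 * Real.sqrt (m k) + c2 * (m k) ^ 2) ≤
        ∑ k, (c1 * Real.sqrt (m' k) + c2 * (m' k) ^ 2)) :
    ∀ k : Fin N, m k = M / N := by
  -- It suffices to show all masses are pairwise equal.
  suffices hpair : ∀ i j : Fin N, m i = m j by
    intro k
    have hNpos : (0:ℝ) < (N:ℝ) := by
      have : 0 < N := lt_of_lt_of_le (by norm_num) hN
      exact_mod_cast this
    have hksum : ∑ k' : Fin N, m k' = (N : ℝ) * m k := by
      rw [Finset.sum_congr rfl fun k' _ => hpair k' k]
      simp [Finset.card_univ, mul_comm]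
    rw [hksum] at hsum
    field_simp
    linarith
  intro i j
  by_cases hij : i = j
  · rw [hij]
  by_contra hab
  set a := m i with ha_def
  set b := m j with hb_def
  have ha : 0 < a := hpos i
  have hb : 0 < b := hpos j
  have hab' : a ≠ b := hab
  -- comparison with two-coordinate perturbations
  have hcomp : ∀ x ∈ Set.Ioo (0:ℝ) (a + b),
      (c1 * Real.sqrt a + c2 * a ^ 2) + (c1 * Real.sqrt b + c2 * b ^ 2) ≤
      (c1 * Real.sqrt x + c2 * x ^ 2) +
        (c1 * Real.sqrt (a + b - x) + c2 * (a + b - x) ^ 2) := by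
    intro x hx
    set m' := Function.update (Function.update m i x) j (a + b - x) with hm'_def
    have hpos' : ∀ k, 0 < m' k := by
      intro k
      by_cases hkj : k = j
      · subst hkj; simp [hm'_def, Function.update_self]; linarith [hx.2]
      · by_cases hki : k = i
        · subst hki
          rw [hm'_def, Function.update_of_ne hkj, Function.update_self]
          exact hx.1
        · rw [hm'_def, Function.update_of_ne hkj, Function.update_of_ne hki]
          exact hpos k
    have hsum' : ∑ k, m' k = M := by
      have h : ∑ k, (Function.update (Function.update m i x) j (a + b - x)) k
          = (∑ k, m k) - m i - m j + x + (a + b - x) :=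
        sum_update_two' i j hij m x (a + b - x) (fun z => z)
      rw [hm'_def, h, hsum]
      simp only [← ha_def, ← hb_def]
      ring
    have hle := hmin N m' hpos' hsum'
    have hsum2 : ∑ k, (c1 * Real.sqrt ((Function.update (Function.update m i x) j (a + b - x)) k)
          + c2 * ((Function.update (Function.update m i x) j (a + b - x)) k) ^ 2)
        = (∑ k, (c1 * Real.sqrt (m k) + c2 * (m k) ^ 2))
          - (c1 * Real.sqrt (m i) + c2 * (m i) ^ 2) - (c1 * Real.sqrt (m j) + c2 * (m j) ^ 2)
          + (c1 * Real.sqrt x + c2 * x ^ 2)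
          + (c1 * Real.sqrt (a + b - x) + c2 * (a + b - x) ^ 2) :=
      sum_update_two' i j hij m x (a + b - x) (fun z => c1 * Real.sqrt z + c2 * z ^ 2)
    rw [hm'_def, hsum2] at hle
    simp only [← ha_def, ← hb_def] at hle
    linarith
  -- the one-variable function and its derivative at the interior minimum a
  set φ : ℝ → ℝ := fun x =>
    (c1 * Real.sqrt x + c2 * x ^ 2) +
      (c1 * Real.sqrt (a + b - x) + c2 * (a + b - x) ^ 2) with hφ_def
  have hφa : φ a = (c1 * Real.sqrt a + c2 * a ^ 2) + (c1 * Real.sqrt b + c2 * b ^ 2) := by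
    simp only [hφ_def, show a + b - a = b by ring]
  have hmem : a ∈ Set.Ioo (0:ℝ) (a + b) := ⟨ha, by linarith⟩
  have hloc : IsLocalMin φ a := by
    refine Filter.eventually_of_mem (Ioo_mem_nhds hmem.1 hmem.2) fun x hx => ?_
    rw [hφa]
    exact hcomp x hx
  have hD : HasDerivAt φ
      (c1 / (2 * Real.sqrt a) + 2 * c2 * a - c1 / (2 * Real.sqrt b) - 2 * c2 * b) a := by
    have h2 : HasDerivAt (fun x : ℝ => a + b - x) (-1) a := (hasDerivAt_id a).const_sub (a + b)
    have hs1 : HasDerivAt (fun x : ℝ => Real.sqrt x) (1 / (2 * Real.sqrt a)) a :=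
      Real.hasDerivAt_sqrt ha.ne'
    have hb' : a + b - a = b := by ring
    have hs2 : HasDerivAt (fun x : ℝ => Real.sqrt (a + b - x)) (-1 / (2 * Real.sqrt b)) a := by
      have hsb : HasDerivAt (fun x : ℝ => Real.sqrt x) (1 / (2 * Real.sqrt b)) (a + b - a) := by
        rw [hb']; exact Real.hasDerivAt_sqrt hb.ne'
      have := hsb.comp a h2
      exact this.congr_deriv (by ring)
    have hp1 : HasDerivAt (fun x : ℝ => x ^ 2) (2 * a) a := by
      simpa using hasDerivAt_pow 2 a
    have hp2 : HasDerivAt (fun x : ℝ => (a + b - x) ^ 2) (-(2 * b)) a := by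
      have := h2.pow 2
      simp only [hb'] at this
      exact this.congr_deriv (by ring)
    have := ((hs1.const_mul c1).add (hp1.const_mul c2)).add
      ((hs2.const_mul c1).add (hp2.const_mul c2))
    exact this.congr_deriv (by ring)
  have hD0 := hloc.hasDerivAt_eq_zero hD
  -- merging inequality via the limit x → 0⁺
  have hccont : Continuous φ := by
    apply Continuous.add
    · exact (continuous_const.mul Real.continuous_sqrt).add
        (continuous_const.mul (continuous_pow 2))
    · exact (continuous_const.mul (Real.continuous_sqrt.comp
        (continuous_const.sub continuous_id))).add
        (continuous_const.mul ((continuous_const.sub continuous_id).pow 2))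
  have hten : Filter.Tendsto φ (nhdsWithin 0 (Set.Ioi 0)) (nhds (φ 0)) :=
    (hccont.tendsto 0).mono_left nhdsWithin_le_nhds
  have hev : ∀ᶠ x in nhdsWithin (0:ℝ) (Set.Ioi 0), φ a ≤ φ x := by
    filter_upwards [Ioo_mem_nhdsGT (by linarith : (0:ℝ) < a + b)] with x hx
    rw [hφa]; exact hcomp x hx
  have hmerge : φ a ≤ φ 0 := ge_of_tendsto hten hev
  have hφ0 : φ 0 = c1 * Real.sqrt (a + b) + c2 * (a + b) ^ 2 := by
    simp [hφ_def, Real.sqrt_zero]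
  -- algebra in terms of square roots
  set u := Real.sqrt a with hu_def
  set v := Real.sqrt b with hv_def
  set w := Real.sqrt (a + b) with hw_def
  have hu : 0 < u := Real.sqrt_pos.mpr ha
  have hv : 0 < v := Real.sqrt_pos.mpr hb
  have hw : 0 < w := Real.sqrt_pos.mpr (by linarith)
  have hu2 : u ^ 2 = a := Real.sq_sqrt ha.le
  have hv2 : v ^ 2 = b := Real.sq_sqrt hb.le
  have hw2 : w ^ 2 = a + b := Real.sq_sqrt (by linarith)
  have huv : u ≠ v := by
    intro h
    exact hab' (by rw [← hu2, ← hv2, h])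
  -- stationarity gives c1 = 4 c2 u v (u + v)
  have hst : (v - u) * (c1 - 4 * c2 * u * v * (u + v)) = 0 := by
    have h2u : (2 * u) ≠ 0 := by positivity
    have h2v : (2 * v) ≠ 0 := by positivity
    field_simp at hD0
    rw [← hu2, ← hv2] at hD0
    linear_combination hD0
  have hkey : c1 = 4 * c2 * u * v * (u + v) := by
    rcases mul_eq_zero.mp hst with h | h
    · exact absurd (by linarith : u = v) huv
    · linarith
  -- merging inequality in u, v, w
  have hm' : c1 * u + c2 * u ^ 4 + (c1 * v + c2 * v ^ 4) ≤ c1 * w + c2 * w ^ 4 := by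
    rw [hφa, hφ0] at hmerge
    have e1 : a ^ 2 = u ^ 4 := by rw [← hu2]; ring
    have e2 : b ^ 2 = v ^ 4 := by rw [← hv2]; ring
    have e3 : (a + b) ^ 2 = w ^ 4 := by rw [← hw2]; ring
    rw [e1, e2, e3] at hmerge
    linarith
  have hw4 : w ^ 4 = u ^ 4 + v ^ 4 + 2 * u ^ 2 * v ^ 2 := by
    have : w ^ 2 = u ^ 2 + v ^ 2 := by rw [hu2, hv2, hw2]
    nlinarith [this]
  have hprod : (u + v - w) * (u + v + w) = 2 * u * v := by
    have : w ^ 2 = u ^ 2 + v ^ 2 := by rw [hu2, hv2, hw2]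
    nlinarith [this]
  have htpos : 0 < u + v - w := by
    nlinarith [hprod, mul_pos hu hv, hu, hv, hw]
  have hm2 : c1 * (u + v - w) ≤ 2 * c2 * u ^ 2 * v ^ 2 := by
    nlinarith [hm', hw4, hc2]
  rw [hkey] at hm2
  have hq : 2 * (u + v) * (u + v - w) ≤ u * v := by
    nlinarith [hm2, mul_pos hc2 (mul_pos hu hv)]
  nlinarith [hq, hprod, htpos, mul_pos hu hv, sq_nonneg (u + v - w)]
end
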